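/- (Support of the average state) The range of the linear map associated with ρμ (i.e. LinearMap.range of Matrix.toEuclideanLin ρμ) equals the linear span of {v g : g ∈ G}. (Here the Haar measure has full support and g ↦ v g is continuous.) -/

import Mathlib

/-!
With `v g = vec (f g)`, `ρμ` is the frame operator `x ↦ ∫ ⟪v g, x⟫ v g dμ`, i.e.
`⟪y, ρμ x⟫ = ∫ ⟪y, v g⟫ ⟪v g, x⟫ dμ`. A vector orthogonal to every `v g` is therefore orthogonal
to the range of `ρμ`. Conversely, if `y` is orthogonal to the range then
`∫ ‖⟪v g, y⟫‖² dμ = ⟪y, ρμ y⟫ = 0`; the integrand is continuous and the Haar measure charges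
every nonempty open set, so `y` is orthogonal to every `v g`. In finite dimension the two
subspaces, having the same orthogonal complement, coincide.
-/

open MeasureTheory
open scoped Kronecker Matrix ComplexOrder

noncomputable section

namespace GroupEstimation

variable {G : Type} [Group G] [TopologicalSpace G] [IsTopologicalGroup G]
  [CompactSpace G] [T2Space G] [MeasurableSpace G] [BorelSpace G]

/-- Vectorization of a square matrix. -/
def vec {d : ℕ} (A : Matrix (Fin d) (Fin d) ℂ) : EuclideanSpace ℂ (Fin d × Fin d) :=
  WithLp.toLp 2 (fun p => A p.1 p.2)

/-- The rank-one state `|f(g)⟩⟩⟨⟨f(g)|`. -/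
def rho {d : ℕ} (f : G → Matrix (Fin d) (Fin d) ℂ) (g : G) :
    Matrix (Fin d × Fin d) (Fin d × Fin d) ℂ :=
  fun p q => f g p.1 p.2 * star (f g q.1 q.2)

/-- `A g = f g ⊗ₖ 1`. -/
def Amat {d : ℕ} (f : G → Matrix (Fin d) (Fin d) ℂ) (g : G) :
    Matrix (Fin d × Fin d) (Fin d × Fin d) ℂ :=
  f g ⊗ₖ (1 : Matrix (Fin d) (Fin d) ℂ)

/-- The average state `ρμ` (entrywise Bochner integral). -/
def rhoMu (μ : Measure G) {d : ℕ} (f : G → Matrix (Fin d) (Fin d) ℂ) :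
    Matrix (Fin d × Fin d) (Fin d × Fin d) ℂ :=
  fun p q => ∫ g, rho f g p q ∂μ

/-- positivity, vanishing at ∅ and countable additivity (the "measure part" of a GPOVM). -/
def IsPreGPOVM {d : ℕ} (M : Set G → Matrix (Fin d × Fin d) (Fin d × Fin d) ℂ) : Prop :=
  (∀ B : Set G, MeasurableSet B → (M B).PosSemidef) ∧ M ∅ = 0 ∧
    ∀ B : ℕ → Set G, (∀ j, MeasurableSet (B j)) → Pairwise (Function.onFun Disjoint B) →
      M (⋃ j, B j) = ∑' j, M (B j)

/-- Generalized POVM. -/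
def IsGPOVM (μ : Measure G) {d : ℕ} (f : G → Matrix (Fin d) (Fin d) ℂ)
    (M : Set G → Matrix (Fin d × Fin d) (Fin d × Fin d) ℂ) : Prop :=
  IsPreGPOVM M ∧ (M Set.univ * rhoMu μ f).trace = 1

/-- Covariance of a GPOVM. -/
def IsCovariant {d : ℕ} (f : G → Matrix (Fin d) (Fin d) ℂ)
    (M : Set G → Matrix (Fin d × Fin d) (Fin d × Fin d) ℂ) : Prop :=
  ∀ (g : G) (B : Set G), MeasurableSet B →
    M ((g * ·) '' B) = Amat f g * M B * (Amat f g)ᴴ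

/-- The covariant GPOVM with seed `T`. -/
def MT (μ : Measure G) {d : ℕ} (f : G → Matrix (Fin d) (Fin d) ℂ)
    (T : Matrix (Fin d × Fin d) (Fin d × Fin d) ℂ) (B : Set G) :
    Matrix (Fin d × Fin d) (Fin d × Fin d) ℂ :=
  fun p q => ∫ g in B, (Amat f g * T * (Amat f g)ᴴ) p q ∂μ

/-- Pointwise risk. -/
def Dpt {d : ℕ} (w : G → G → ℝ)
    (ν : (Set G → Matrix (Fin d × Fin d) (Fin d × Fin d) ℂ) → G → Measure G)
    (M : Set G → Matrix (Fin d × Fin d) (Fin d × Fin d) ℂ) (g : G) : ℝ :=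
  ∫ gh, w g gh ∂(ν M g)

/-- Bayes risk. -/
def Dbayes (μ : Measure G) {d : ℕ} (w : G → G → ℝ)
    (ν : (Set G → Matrix (Fin d × Fin d) (Fin d × Fin d) ℂ) → G → Measure G)
    (M : Set G → Matrix (Fin d × Fin d) (Fin d × Fin d) ℂ) : ℝ :=
  ∫ g, Dpt w ν M g ∂μ

/-- Minimax risk. -/
def Dmax {d : ℕ} (w : G → G → ℝ)
    (ν : (Set G → Matrix (Fin d × Fin d) (Fin d × Fin d) ℂ) → G → Measure G)
    (M : Set G → Matrix (Fin d × Fin d) (Fin d × Fin d) ℂ) : ℝ :=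
  ⨆ g : G, Dpt w ν M g

/-- Twisted GPOVM `M_g`. -/
def twist {d : ℕ} (f : G → Matrix (Fin d) (Fin d) ℂ)
    (M : Set G → Matrix (Fin d × Fin d) (Fin d × Fin d) ℂ) (g : G) (B : Set G) :
    Matrix (Fin d × Fin d) (Fin d × Fin d) ℂ :=
  (Amat f g)ᴴ * M ((g * ·) '' B) * Amat f g

/-- Matrix of the orthogonal projection onto span {v g}. -/
def P0 {d : ℕ} (f : G → Matrix (Fin d) (Fin d) ℂ) :
    Matrix (Fin d × Fin d) (Fin d × Fin d) ℂ :=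
  Matrix.toEuclideanLin.symm
    ((Submodule.span ℂ (Set.range fun g => vec (f g))).subtype ∘ₗ
      (Submodule.orthogonalProjectionOnto (Submodule.span ℂ (Set.range fun g => vec (f g)))).toLinearMap)

end GroupEstimation

open scoped InnerProductSpace

section FrameOperator

variable {𝕜 E X : Type*} [RCLike 𝕜] [NormedAddCommGroup E] [InnerProductSpace 𝕜 E]
  [MeasurableSpace X] {μ : Measure X} {v : X → E} {T : E →ₗ[𝕜] E}

theorem range_le_span_of_inner_eq_integral [FiniteDimensional 𝕜 E]
    (hT : ∀ x y, ⟪y, T x⟫_𝕜 = ∫ g, ⟪y, v g⟫_𝕜 * ⟪v g, x⟫_𝕜 ∂μ) :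
    LinearMap.range T ≤ Submodule.span 𝕜 (Set.range v) := by
  rw [← Submodule.orthogonal_orthogonal (Submodule.span 𝕜 (Set.range v))]
  rintro _ ⟨x, rfl⟩
  rw [Submodule.mem_orthogonal]
  intro y hy
  have hyv : ∀ g, ⟪y, v g⟫_𝕜 = 0 := fun g =>
    (Submodule.mem_orthogonal' _ _).mp hy (v g) (Submodule.subset_span ⟨g, rfl⟩)
  simp [hT, hyv]

theorem inner_self_apply_eq_integral_norm_sq
    (hT : ∀ x y, ⟪y, T x⟫_𝕜 = ∫ g, ⟪y, v g⟫_𝕜 * ⟪v g, x⟫_𝕜 ∂μ) (y : E) :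
    ⟪y, T y⟫_𝕜 = ((∫ g, ‖⟪v g, y⟫_𝕜‖ ^ 2 ∂μ : ℝ) : 𝕜) := by
  have hpt : ∀ g, ⟪y, v g⟫_𝕜 * ⟪v g, y⟫_𝕜 = ((‖⟪v g, y⟫_𝕜‖ ^ 2 : ℝ) : 𝕜) := fun g => by
    rw [← inner_conj_symm, RCLike.conj_mul, RCLike.ofReal_pow]
  simp_rw [hT, hpt, integral_ofReal]

theorem inner_eq_zero_of_mem_orthogonal_range [TopologicalSpace X] [OpensMeasurableSpace X]
    [CompactSpace X] [IsFiniteMeasureOnCompacts μ] [μ.IsOpenPosMeasure] (hv : Continuous v)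
    (hT : ∀ x y, ⟪y, T x⟫_𝕜 = ∫ g, ⟪y, v g⟫_𝕜 * ⟪v g, x⟫_𝕜 ∂μ) {y : E}
    (hy : y ∈ (LinearMap.range T)ᗮ) (g : X) : ⟪v g, y⟫_𝕜 = 0 := by
  have hcont : Continuous fun g => ‖⟪v g, y⟫_𝕜‖ ^ 2 := by fun_prop
  have hzero : ∫ g, ‖⟪v g, y⟫_𝕜‖ ^ 2 ∂μ = 0 := by
    have := (Submodule.mem_orthogonal' _ _).mp hy (T y) ⟨y, rfl⟩
    rwa [inner_self_apply_eq_integral_norm_sq hT, RCLike.ofReal_eq_zero] at this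
  by_contra hne
  exact (hcont.integral_pos_of_hasCompactSupport_nonneg_nonzero
    (HasCompactSupport.of_compactSpace _) (fun _ => by positivity) (x := g) (by simpa)).ne' hzero

theorem span_le_range_of_inner_eq_integral [FiniteDimensional 𝕜 E] [TopologicalSpace X]
    [OpensMeasurableSpace X] [CompactSpace X] [IsFiniteMeasureOnCompacts μ] [μ.IsOpenPosMeasure]
    (hv : Continuous v) (hT : ∀ x y, ⟪y, T x⟫_𝕜 = ∫ g, ⟪y, v g⟫_𝕜 * ⟪v g, x⟫_𝕜 ∂μ) :
    Submodule.span 𝕜 (Set.range v) ≤ LinearMap.range T := by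
  rw [Submodule.span_le]
  rintro _ ⟨g, rfl⟩
  rw [SetLike.mem_coe, ← (LinearMap.range T).orthogonal_orthogonal, Submodule.mem_orthogonal']
  exact fun y hy => inner_eq_zero_of_mem_orthogonal_range hv hT hy g

theorem range_eq_span_of_inner_eq_integral [FiniteDimensional 𝕜 E] [TopologicalSpace X]
    [OpensMeasurableSpace X] [CompactSpace X] [IsFiniteMeasureOnCompacts μ] [μ.IsOpenPosMeasure]
    (hv : Continuous v) (hT : ∀ x y, ⟪y, T x⟫_𝕜 = ∫ g, ⟪y, v g⟫_𝕜 * ⟪v g, x⟫_𝕜 ∂μ) :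
    LinearMap.range T = Submodule.span 𝕜 (Set.range v) :=
  (range_le_span_of_inner_eq_integral hT).antisymm (span_le_range_of_inner_eq_integral hv hT)

end FrameOperator

section EntrywiseIntegral

variable {𝕜 m n : Type*} [RCLike 𝕜] [Fintype m] [Fintype n] [DecidableEq n]

theorem inner_toEuclideanLin_eq_sum (M : Matrix m n 𝕜) (x : EuclideanSpace 𝕜 n)
    (y : EuclideanSpace 𝕜 m) :
    ⟪y, Matrix.toEuclideanLin M x⟫_𝕜 = ∑ p, ∑ q, star (y p) * M p q * x q := by
  simp [EuclideanSpace.inner_eq_star_dotProduct, dotProduct, Matrix.mulVec, Finset.mul_sum,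
    mul_comm, mul_left_comm, mul_assoc]

theorem inner_toEuclideanLin_integral {X : Type*} [MeasurableSpace X] {μ : Measure X}
    (M : X → Matrix m n 𝕜) (hM : ∀ p q, Integrable (fun g => M g p q) μ)
    (x : EuclideanSpace 𝕜 n) (y : EuclideanSpace 𝕜 m) :
    ⟪y, Matrix.toEuclideanLin (fun p q => ∫ g, M g p q ∂μ) x⟫_𝕜
      = ∫ g, ⟪y, Matrix.toEuclideanLin (M g) x⟫_𝕜 ∂μ := by
  have hint : ∀ p q, Integrable (fun g => star (y p) * M g p q * x q) μ := fun p q =>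
    ((hM p q).const_mul _).mul_const _
  simp_rw [inner_toEuclideanLin_eq_sum]
  rw [integral_finsetSum _ fun p _ => integrable_finsetSum _ fun q _ => hint p q]
  simp_rw [integral_finsetSum _ fun q _ => hint _ q, integral_mul_const, integral_const_mul]
  exact inner_toEuclideanLin_eq_sum _ x y

end EntrywiseIntegral

namespace GroupEstimation

theorem toEuclideanLin_rho {G : Type} {d : ℕ} (f : G → Matrix (Fin d) (Fin d) ℂ) (g : G) :
    Matrix.toEuclideanLin (rho f g) = InnerProductSpace.rankOne ℂ (vec (f g)) (vec (f g)) := by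
  rw [← LinearEquiv.eq_symm_apply, InnerProductSpace.symm_toEuclideanLin_rankOne]
  ext p q
  simp [rho, vec, Matrix.vecMulVec_apply]

theorem continuous_vec {X : Type*} [TopologicalSpace X] {d : ℕ}
    {f : X → Matrix (Fin d) (Fin d) ℂ} (hf : Continuous f) : Continuous fun x => vec (f x) := by
  unfold vec
  fun_prop

theorem inner_toEuclideanLin_rhoMu {G : Type} [TopologicalSpace G] [CompactSpace G]
    [MeasurableSpace G] [OpensMeasurableSpace G] (μ : Measure G) [IsFiniteMeasureOnCompacts μ]
    {d : ℕ} {f : G → Matrix (Fin d) (Fin d) ℂ} (hf : Continuous f)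
    (x y : EuclideanSpace ℂ (Fin d × Fin d)) :
    ⟪y, Matrix.toEuclideanLin (rhoMu μ f) x⟫_ℂ = ∫ g, ⟪y, vec (f g)⟫_ℂ * ⟪vec (f g), x⟫_ℂ ∂μ := by
  have hrho : ∀ p q, Continuous fun g => rho f g p q := fun p q => by
    unfold rho
    fun_prop
  unfold rhoMu
  rw [inner_toEuclideanLin_integral _
    fun p q => (hrho p q).integrable_of_hasCompactSupport (.of_compactSpace _)]
  simp_rw [toEuclideanLin_rho, ContinuousLinearMap.coe_coe, InnerProductSpace.rankOne_apply,
    inner_smul_right, mul_comm]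

theorem range_rhoMu_eq_span_general
    {G : Type} [Group G] [TopologicalSpace G]
    [CompactSpace G] [MeasurableSpace G] [BorelSpace G]
    (μ : Measure G) [μ.IsHaarMeasure]
    {d : ℕ} (f : G → Matrix (Fin d) (Fin d) ℂ)
    (hf_cont : Continuous f)
    :
    LinearMap.range (Matrix.toEuclideanLin (rhoMu μ f)) =
      Submodule.span ℂ (Set.range fun g : G => vec (f g)) :=
  range_eq_span_of_inner_eq_integral (continuous_vec hf_cont)
    (fun x y => inner_toEuclideanLin_rhoMu μ hf_cont x y)

/-- The support of the average state is the span of the vectors `v g`. -/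
theorem range_rhoMu_eq_span
    {G : Type} [Group G] [TopologicalSpace G] [IsTopologicalGroup G]
    [CompactSpace G] [T2Space G] [MeasurableSpace G] [BorelSpace G]
    (μ : Measure G) [μ.IsHaarMeasure] [IsProbabilityMeasure μ]
    {d : ℕ} (hd : 0 < d) (f : G → Matrix (Fin d) (Fin d) ℂ)
    (hf_cont : Continuous f) (hf_one : f 1 = 1)
    (hf_unitary : ∀ g : G, f g ∈ Matrix.unitaryGroup (Fin d) ℂ)
    (c : G → G → ℂ) (hc_norm : ∀ g h : G, ‖c g h‖ = 1)
    (hc_proj : ∀ g h : G, f (g * h) = c g h • (f g * f h))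
    :
    LinearMap.range (Matrix.toEuclideanLin (rhoMu μ f)) =
      Submodule.span ℂ (Set.range fun g : G => vec (f g)) :=
  range_rhoMu_eq_span_general μ f hf_cont

end GroupEstimation
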